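/- arXiv:1209.5367 — 2 statements merged into one kernel-verified Lean document; each statement's English description precedes it below -/
import Mathlib

section
/- (Density Theorem, strong operator topology.) For every bounded operator A on H, every ε > 0, every m ∈ ℕ, and every family of vectors v : Fin m → H, there exist a finite subset D ⊆ ℤ^n and a bounded operator T on H that is local upon D such that ‖A (v i) − T (v i)‖ < ε for all i; that is, the local operators are dense in the bounded operators on H in the strong operator topology. -/
open scoped ENNReal

noncomputable section

namespace QCA

abbrev Lat (n : ℕ) : Type := Fin n → ℤ

def Conf (n : ℕ) (A : Type*) (q0 : A) : Type _ :=
  {c : Lat n → A // {x : Lat n | c x ≠ q0}.Finite}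

def c0 (n : ℕ) (A : Type*) (q0 : A) : Conf n A q0 :=
  ⟨fun _ => q0, by simp⟩

abbrev H (n : ℕ) (A : Type*) (q0 : A) : Type _ := lp (fun _ : Conf n A q0 => ℂ) 2

def eVec {n : ℕ} {A : Type*} {q0 : A} (c : Conf n A q0) : H n A q0 :=
  letI : DecidableEq (Conf n A q0) := Classical.decEq _
  lp.single 2 c 1

/-- Translation of a configuration by `z`: the configuration `x ↦ c (x + z)`. -/
def shiftConf {n : ℕ} {A : Type*} {q0 : A} (z : Lat n) (c : Conf n A q0) : Conf n A q0 :=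
  ⟨fun x => c.1 (x + z), by
    have h : {x : Lat n | c.1 (x + z) ≠ q0} ⊆ (fun x : Lat n => x + z) ⁻¹' {x | c.1 x ≠ q0} :=
      fun x hx => hx
    exact (c.2.preimage ((add_left_injective z).injOn)).subset h⟩

/-- Translation by `z` as a permutation of the set of finite configurations. -/
def shiftEquiv {n : ℕ} {A : Type*} (q0 : A) (z : Lat n) : Conf n A q0 ≃ Conf n A q0 where
  toFun := shiftConf z
  invFun := shiftConf (-z)
  left_inv c := Subtype.ext (funext fun x => by
    show c.1 (x + -z + z) = c.1 x
    rw [neg_add_cancel_right])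
  right_inv c := Subtype.ext (funext fun x => by
    show c.1 (x + z + -z) = c.1 x
    rw [add_neg_cancel_right])

theorem memℓp_comp_equiv {ι κ : Type*} (e : κ ≃ ι) {f : ι → ℂ} (hf : Memℓp f 2) :
    Memℓp (fun k => f (e k)) 2 := by
  have hp : 0 < (2 : ℝ≥0∞).toReal := by norm_num
  exact memℓp_gen ((e.summable_iff
    (f := fun i => ‖f i‖ ^ (2 : ℝ≥0∞).toReal)).mpr (hf.summable hp))

/-- The unitary operator on `ℓ²` induced by a permutation of the index set. -/
def lpCongr {ι κ : Type*} (e : ι ≃ κ) :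
    lp (fun _ : ι => ℂ) 2 ≃ₗᵢ[ℂ] lp (fun _ : κ => ℂ) 2 where
  toLinearEquiv :=
    { toFun := fun f => ⟨fun k => f (e.symm k), memℓp_comp_equiv e.symm (lp.memℓp f)⟩
      map_add' := fun f g => lp.ext (funext fun k => by
        simp [lp.coeFn_add]; rfl)
      map_smul' := fun r f => lp.ext (funext fun k => by
        simp [lp.coeFn_smul])
      invFun := fun g => ⟨fun i => g (e i), memℓp_comp_equiv e (lp.memℓp g)⟩
      left_inv := fun f => lp.ext (funext fun i => by simp)
      right_inv := fun g => lp.ext (funext fun k => by simp) }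
  norm_map' := fun f => by
    have hp : 0 < (2 : ℝ≥0∞).toReal := by norm_num
    rw [lp.norm_eq_tsum_rpow hp, lp.norm_eq_tsum_rpow hp]
    congr 1
    exact e.symm.tsum_eq (fun i => ‖f i‖ ^ (2 : ℝ≥0∞).toReal)

/-- The translation operator `τ_z` on the Hilbert space of finite configurations. -/
def tau {n : ℕ} {A : Type*} (q0 : A) (z : Lat n) : H n A q0 ≃ₗᵢ[ℂ] H n A q0 :=
  lpCongr (shiftEquiv q0 z)

/-- A bounded operator on `H` is translation invariant if `τ_z ∘ M ∘ τ_z⁻¹ = M` for all `z`. -/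
def TranslationInvariant {n : ℕ} {A : Type*} (q0 : A) (M : H n A q0 →L[ℂ] H n A q0) : Prop :=
  ∀ (z : Lat n) (v : H n A q0), tau q0 z (M ((tau q0 z).symm v)) = M v


section Local

variable {n : ℕ} {A : Type*} [Fintype A]

/-- The configuration agreeing with `f` on `D` and with `c` outside `D`. -/
def override {q0 : A} (D : Finset (Lat n)) (f : {x // x ∈ D} → A) (c : Conf n A q0) :
    Conf n A q0 :=
  ⟨fun x => if h : x ∈ D then f ⟨x, h⟩ else c.1 x, by
    refine Set.Finite.subset (Set.Finite.union D.finite_toSet c.2) ?_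
    intro x hx
    rcases Decidable.em (x ∈ D) with h | h
    · exact Set.mem_union_left _ h
    · exact Set.mem_union_right _ (by simpa [h] using hx)⟩

/-- A bounded operator on the Hilbert space of finite configurations is local upon the finite
set `D` of cells if its action on basis vectors only modifies, and only reads, the cells in `D`. -/
def IsLocalUpon (q0 : A) (D : Finset (Lat n)) (T : H n A q0 →L[ℂ] H n A q0) : Prop :=
  ∃ a : ({x // x ∈ D} → A) → ({x // x ∈ D} → A) → ℂ, ∀ c : Conf n A q0,
    T (eVec c) = ∑ f : {x // x ∈ D} → A,
      a f (fun x => c.1 x.1) • eVec (override D f c)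

/-- The neighborhood of the cell `x`: `𝒩_x = {x + k : k ∈ 𝒩}`. -/
def nbhd {n : ℕ} (𝒩 : Finset (Lat n)) (x : Lat n) : Finset (Lat n) :=
  𝒩.image (fun k => x + k)

/-- The reflected neighborhood of the cell `x`: `𝒱_x = {x - k : k ∈ 𝒩}`. -/
def rnbhd {n : ℕ} (𝒩 : Finset (Lat n)) (x : Lat n) : Finset (Lat n) :=
  𝒩.image (fun k => x - k)

/-- A unitary `M` is causal relative to the neighborhood `𝒩` if conjugation `M† A M` maps
operators local upon a cell `x` to operators local upon `𝒩_x`. -/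
def Causal (q0 : A) (𝒩 : Finset (Lat n)) (M : H n A q0 →L[ℂ] H n A q0) : Prop :=
  ∀ (x : Lat n) (B : H n A q0 →L[ℂ] H n A q0), IsLocalUpon q0 {x} B →
    IsLocalUpon q0 (nbhd 𝒩 x) (ContinuousLinearMap.adjoint M ∘L B ∘L M)

end Local

/-- The standard basis vector of the one-cell Hilbert space `ℂ^A`. -/
def wVec (A : Type*) [Fintype A] (a : A) : EuclideanSpace ℂ A :=
  letI : DecidableEq A := Classical.decEq A
  EuclideanSpace.single a 1

/-- The configuration obtained from `c` by replacing the value at the cell `x` by `r`. -/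
def updateConf {n : ℕ} {A : Type*} {q0 : A} (x : Lat n) (r : A) (c : Conf n A q0) :
    Conf n A q0 :=
  ⟨Function.update c.1 x r, by
    refine Set.Finite.subset (c.2.union (Set.finite_singleton x)) ?_
    intro y hy
    rcases eq_or_ne y x with rfl | hxy
    · exact Set.mem_union_right _ rfl
    · exact Set.mem_union_left _ (by
        simpa [Function.update_of_ne hxy] using hy)⟩

/-- The subalgebra `𝔇_{y,x}` of `End(ℂ^A)`: endomorphisms `a` of the one-cell Hilbert space
such that the operator `ι_x(a)` local upon `{x}` implementing `a` at the cell `x` is of the form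
`R† B R` for some operator `B` local upon `{x - y}`. -/
def Dset {n : ℕ} {A : Type*} [Fintype A] (q0 : A)
    (R : H n A q0 →L[ℂ] H n A q0) (y x : Lat n) :
    Set (Module.End ℂ (EuclideanSpace ℂ A)) :=
  {a | ∃ B : H n A q0 →L[ℂ] H n A q0, IsLocalUpon q0 {x - y} B ∧
    ∀ c : Conf n A q0,
      (ContinuousLinearMap.adjoint R ∘L B ∘L R) (eVec c) =
        ∑ q : A, (inner ℂ (wVec A q) (a (wVec A (c.1 x))) : ℂ) • eVec (updateConf x q c)}



section Component

variable {n : ℕ} {𝒩 : Finset (Lat n)} {K : {z // z ∈ 𝒩} → Type*}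

/-- The propagation map on configurations in component form:
`(s c) x z = (c (x + z)) z`. -/
def sConf (qz : ∀ z : {z // z ∈ 𝒩}, K z) (c : Conf n (∀ z : {z // z ∈ 𝒩}, K z) qz) :
    Conf n (∀ z : {z // z ∈ 𝒩}, K z) qz :=
  ⟨fun x z => c.1 (x + z.1) z, by
    refine Set.Finite.subset
      (Set.finite_iUnion (fun z : {z // z ∈ 𝒩} =>
        (c.2.preimage ((add_left_injective z.1).injOn)))) ?_
    intro x hx
    obtain ⟨z, hz⟩ := Function.ne_iff.mp hx
    exact Set.mem_iUnion.2 ⟨z, fun h => hz (congrFun h z)⟩⟩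

end Component

/-- The support of a finite configuration, as a `Finset`. -/
def suppF {n : ℕ} {A : Type*} {q0 : A} (c : Conf n A q0) : Finset (Lat n) :=
  c.2.toFinset

/-- The property characterizing the local isomorphism `S̃ : H → Ĥ` induced by a one-cell
unitary `S : W → Ŵ`. -/
def StildeProp {n : ℕ} {A B : Type*} [Fintype A] [Fintype B] (q0 : A) (qh : B)
    (Slin : EuclideanSpace ℂ A ≃ₗᵢ[ℂ] EuclideanSpace ℂ B)
    (St : H n A q0 ≃ₗᵢ[ℂ] H n B qh) : Prop :=
  ∀ c : Conf n A q0,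
    St (eVec c) = ∑ g : {x // x ∈ suppF c} → B,
      (∏ x : {x // x ∈ suppF c}, (inner ℂ (wVec B (g x)) (Slin (wVec A (c.1 x.1))) : ℂ)) •
        eVec (override (suppF c) g (c0 n B qh))

/-- An endomorphism of the one-cell Hilbert space `ℂ^P`, `P = Π_{z ∈ 𝒩} K z`, acting only on
the `y`-th coordinate. -/
def ActsOnCoord {n : ℕ} {𝒩 : Finset (Lat n)} {K : {z // z ∈ 𝒩} → Type*}
    [∀ z, Fintype (K z)] (y : {z // z ∈ 𝒩})
    (Aop : Module.End ℂ (EuclideanSpace ℂ (∀ z : {z // z ∈ 𝒩}, K z))) : Prop :=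
  ∃ f : K y → K y → ℂ, ∀ p p' : ∀ z : {z // z ∈ 𝒩}, K z,
    ((∀ z : {z // z ∈ 𝒩}, z ≠ y → p z = p' z) →
      (inner ℂ (wVec _ p) (Aop (wVec _ p')) : ℂ) = f (p y) (p' y)) ∧
    (¬ (∀ z : {z // z ∈ 𝒩}, z ≠ y → p z = p' z) →
      (inner ℂ (wVec _ p) (Aop (wVec _ p')) : ℂ) = 0)

/-- A factorization of the module `W` as a tensor product `⨂_{k} V k` carrying the sets of
endomorphisms `Dsets k` onto the endomorphisms acting on the `k`-th tensor factor alone. -/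
structure PiTensorFactorization (ι : Type) [Fintype ι] [DecidableEq ι]
    (W : Type*) [AddCommGroup W] [Module ℂ W]
    (Dsets : ι → Set (Module.End ℂ W)) : Type _ where
  /-- The tensor factors. -/
  V : ι → Type
  [grp : ∀ k, AddCommGroup (V k)]
  [mod : ∀ k, Module ℂ (V k)]
  fin : ∀ k, FiniteDimensional ℂ (V k)
  /-- The linear isomorphism with the tensor product. -/
  S : W ≃ₗ[ℂ] PiTensorProduct ℂ V
  cond : ∀ y : ι,
    (fun a : Module.End ℂ W => S.conj a) '' (Dsets y) =
      Set.range (fun f : Module.End ℂ (V y) =>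
        (PiTensorProduct.map
          (Function.update (fun k => (LinearMap.id : V k →ₗ[ℂ] V k)) y f) :
            Module.End ℂ (PiTensorProduct ℂ V)))

/-- The continuous linear map underlying a linear isometry equivalence. -/
def isomCLM {E F : Type*} [NormedAddCommGroup E] [NormedAddCommGroup F]
    [NormedSpace ℂ E] [NormedSpace ℂ F] (e : E ≃ₗᵢ[ℂ] F) : E →L[ℂ] F :=
  e.toLinearIsometry.toContinuousLinearMap


/-!
For a finite window `D`, let `J_D : ℂ^(D → Q) → H` be the isometry onto the span of the
configurations supported in `D`, so that `P_D = J_D J_D†` is the orthogonal projection onto it.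
As `H` is an orthogonal sum, over the configurations quiescent on `D`, of copies of `ℂ^(D → Q)`,
the compression `J_D† A J_D` acting on every copy at once is an operator `T_D` local upon `D`,
with `‖T_D‖ ≤ ‖A‖` and `T_D P_D = P_D A P_D`. As `D` exhausts `ℤ^n`, `P_D → 1` strongly, and the
uniform bound turns this into `T_D → A` strongly.
-/

open Filter Topology

section Projections

variable {E : Type*} [NormedAddCommGroup E] [InnerProductSpace ℂ E]

theorem tendsto_apply_of_comp_starProjection {ι : Type*} [Preorder ι]
    (U : ι → Submodule ℂ E) [∀ i, (U i).HasOrthogonalProjection] (hU : Monotone U)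
    (hdense : ⊤ ≤ (⨆ i, U i).topologicalClosure) (A : E →L[ℂ] E) (T : ι → E →L[ℂ] E) {C : ℝ}
    (hT : ∀ i, ‖T i‖ ≤ C)
    (hcomp : ∀ i,
      T i ∘L (U i).starProjection = (U i).starProjection ∘L A ∘L (U i).starProjection)
    (x : E) : Tendsto (fun i => T i x) atTop (𝓝 (A x)) := by
  have hP : ∀ y, Tendsto (fun i => (U i).starProjection y) atTop (𝓝 y) :=
    fun y => Submodule.starProjection_tendsto_self U hU y hdense
  have hsplit : ∀ i, T i x - A x = T i (x - (U i).starProjection x)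
      + (U i).starProjection (A ((U i).starProjection x - x))
      + ((U i).starProjection (A x) - A x) := by
    intro i
    have := congrArg (fun S : E →L[ℂ] E => S x) (hcomp i)
    simp only [ContinuousLinearMap.comp_apply] at this
    rw [map_sub, map_sub, map_sub, this]
    abel
  rw [tendsto_iff_norm_sub_tendsto_zero]
  have hx : Tendsto (fun i => ‖(U i).starProjection x - x‖) atTop (𝓝 0) :=
    tendsto_iff_norm_sub_tendsto_zero.1 (hP x)
  have hAx : Tendsto (fun i => ‖(U i).starProjection (A x) - A x‖) atTop (𝓝 0) :=
    tendsto_iff_norm_sub_tendsto_zero.1 (hP (A x))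
  refine squeeze_zero (fun _ => norm_nonneg _) (fun i => ?_)
    (by simpa using ((hx.const_mul C).add (hx.const_mul ‖A‖)).add hAx)
  calc ‖T i x - A x‖
      ≤ ‖T i (x - (U i).starProjection x)‖
        + ‖(U i).starProjection (A ((U i).starProjection x - x))‖
        + ‖(U i).starProjection (A x) - A x‖ := by rw [hsplit]; exact norm_add₃_le
    _ ≤ C * ‖(U i).starProjection x - x‖ + ‖A‖ * ‖(U i).starProjection x - x‖
        + ‖(U i).starProjection (A x) - A x‖ := by
      gcongr
      · rw [norm_sub_rev]
        exact ((T i).le_opNorm _).trans (by gcongr; exact hT i)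
      · refine ((U i).starProjection.le_opNorm _).trans ?_
        refine (mul_le_of_le_one_left (norm_nonneg _) (U i).starProjection_norm_le).trans ?_
        exact A.le_opNorm _

theorem comp_adjoint_eq_starProjection [FiniteDimensional ℂ E] {F : Type*}
    [NormedAddCommGroup F] [InnerProductSpace ℂ F] [CompleteSpace F] (J : E →ₗᵢ[ℂ] F) :
    J.toContinuousLinearMap ∘L ContinuousLinearMap.adjoint J.toContinuousLinearMap =
      (LinearMap.range J.toLinearMap).starProjection := by
  have : CompleteSpace E := FiniteDimensional.complete ℂ E
  set J' := J.toContinuousLinearMap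
  have hJ : ContinuousLinearMap.adjoint J' ∘L J' = 1 :=
    (ContinuousLinearMap.norm_map_iff_adjoint_comp_self J').1 J.norm_map
  ext x
  symm
  refine Submodule.eq_starProjection_of_mem_of_inner_eq_zero ⟨_, rfl⟩ ?_
  rintro _ ⟨u, rfl⟩
  change inner ℂ (x - J' (ContinuousLinearMap.adjoint J' x)) (J' u) = 0
  rw [← ContinuousLinearMap.adjoint_inner_left, map_sub, ← ContinuousLinearMap.comp_apply _ J',
    hJ]
  simp

end Projections

theorem sum_norm_sq_le_norm_sq {ι : Type*} (ψ : lp (fun _ : ι => ℂ) 2) (s : Finset ι) :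
    ∑ i ∈ s, ‖ψ i‖ ^ 2 ≤ ‖ψ‖ ^ 2 := by
  simpa [Real.rpow_two] using lp.sum_rpow_le_norm_rpow (p := 2) (by norm_num) ψ s

theorem lpCongr_apply {ι κ : Type*} (e : ι ≃ κ) (f : lp (fun _ : ι => ℂ) 2) (k : κ) :
    lpCongr e f k = f (e.symm k) :=
  rfl

theorem lpCongr_symm_apply {ι κ : Type*} (e : ι ≃ κ) (g : lp (fun _ : κ => ℂ) 2) (i : ι) :
    (lpCongr e).symm g i = g (e i) :=
  rfl

theorem lpCongr_single {ι κ : Type*} [DecidableEq ι] [DecidableEq κ] (e : ι ≃ κ) (i : ι)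
    (a : ℂ) : lpCongr e (lp.single 2 i a) = lp.single 2 (e i) a := by
  ext k
  simp [lpCongr_apply, lp.single_apply, Pi.single_apply, e.symm_apply_eq]

theorem lpCongr_symm_single {ι κ : Type*} [DecidableEq ι] [DecidableEq κ] (e : ι ≃ κ) (k : κ)
    (a : ℂ) : (lpCongr e).symm (lp.single 2 k a) = lp.single 2 (e.symm k) a := by
  ext i
  simp [lpCongr_symm_apply, lp.single_apply, Pi.single_apply, e.eq_symm_apply]

section Fiberwise

variable {O F : Type*}

def fiber (ψ : lp (fun _ : O × F => ℂ) 2) (o : O) : EuclideanSpace ℂ F :=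
  WithLp.toLp 2 fun f => ψ (o, f)

theorem fiber_add (ψ φ : lp (fun _ : O × F => ℂ) 2) (o : O) :
    fiber (ψ + φ) o = fiber ψ o + fiber φ o :=
  rfl

theorem fiber_smul (c : ℂ) (ψ : lp (fun _ : O × F => ℂ) 2) (o : O) :
    fiber (c • ψ) o = c • fiber ψ o :=
  rfl

theorem fiber_single [DecidableEq O] [DecidableEq F] (o o' : O) (g : F) (a : ℂ) :
    fiber (lp.single 2 (o, g) a) o' = if o' = o then EuclideanSpace.single g a else 0 := by
  ext f
  by_cases h : o' = o
  · subst h; simp [fiber, lp.single_apply, Pi.single_apply]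
  · simp [fiber, lp.single_apply, h]

variable [Fintype F]

theorem sum_norm_fiber_sq_le (ψ : lp (fun _ : O × F => ℂ) 2) (S : Finset O) :
    ∑ o ∈ S, ‖fiber ψ o‖ ^ 2 ≤ ‖ψ‖ ^ 2 := by
  simp only [EuclideanSpace.norm_sq_eq]
  rw [← Finset.sum_product']
  exact sum_norm_sq_le_norm_sq ψ _

theorem sum_norm_sq_fiberwise_le (M : EuclideanSpace ℂ F →L[ℂ] EuclideanSpace ℂ F)
    (ψ : lp (fun _ : O × F => ℂ) 2) (s : Finset (O × F)) :
    ∑ p ∈ s, ‖M (fiber ψ p.1) p.2‖ ^ 2 ≤ (‖M‖ * ‖ψ‖) ^ 2 := by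
  classical
  calc ∑ p ∈ s, ‖M (fiber ψ p.1) p.2‖ ^ 2
      ≤ ∑ p ∈ s.image Prod.fst ×ˢ Finset.univ, ‖M (fiber ψ p.1) p.2‖ ^ 2 :=
        Finset.sum_le_sum_of_subset_of_nonneg
          (fun p hp => Finset.mem_product.2 ⟨Finset.mem_image_of_mem _ hp, Finset.mem_univ _⟩)
          (fun _ _ _ => by positivity)
    _ = ∑ o ∈ s.image Prod.fst, ‖M (fiber ψ o)‖ ^ 2 := by
        simp only [EuclideanSpace.norm_sq_eq, Finset.sum_product]
    _ ≤ ∑ o ∈ s.image Prod.fst, ‖M‖ ^ 2 * ‖fiber ψ o‖ ^ 2 := by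
        gcongr with o
        rw [← mul_pow]
        exact pow_le_pow_left₀ (norm_nonneg _) (M.le_opNorm _) 2
    _ ≤ (‖M‖ * ‖ψ‖) ^ 2 := by
        rw [← Finset.mul_sum, mul_pow]
        gcongr
        exact sum_norm_fiber_sq_le ψ _

def fiberwise (M : EuclideanSpace ℂ F →L[ℂ] EuclideanSpace ℂ F) :
    lp (fun _ : O × F => ℂ) 2 →L[ℂ] lp (fun _ : O × F => ℂ) 2 :=
  LinearMap.mkContinuous
    { toFun := fun ψ => ⟨fun p => M (fiber ψ p.1) p.2, memℓp_gen' (C := (‖M‖ * ‖ψ‖) ^ 2)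
        fun s => by simpa [Real.rpow_two] using sum_norm_sq_fiberwise_le M ψ s⟩
      map_add' := fun ψ φ => by
        ext p
        simp only [fiber_add, map_add]
        rfl
      map_smul' := fun c ψ => by
        ext p
        simp only [fiber_smul, map_smul]
        rfl }
    ‖M‖ fun ψ => lp.norm_le_of_forall_sum_le (p := 2) (by norm_num) (by positivity)
      fun s => by simpa [Real.rpow_two] using sum_norm_sq_fiberwise_le M ψ s

theorem norm_fiberwise_le (M : EuclideanSpace ℂ F →L[ℂ] EuclideanSpace ℂ F) :
    ‖(fiberwise M : lp (fun _ : O × F => ℂ) 2 →L[ℂ] _)‖ ≤ ‖M‖ :=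
  LinearMap.mkContinuous_norm_le _ (norm_nonneg M) _

theorem fiberwise_apply (M : EuclideanSpace ℂ F →L[ℂ] EuclideanSpace ℂ F)
    (ψ : lp (fun _ : O × F => ℂ) 2) (p : O × F) :
    fiberwise M ψ p = M (fiber ψ p.1) p.2 :=
  rfl

theorem fiberwise_single [DecidableEq O] [DecidableEq F]
    (M : EuclideanSpace ℂ F →L[ℂ] EuclideanSpace ℂ F) (o : O) (g : F) :
    fiberwise M (lp.single 2 (o, g) 1) =
      ∑ f, M (EuclideanSpace.single g 1) f • lp.single 2 (o, f) 1 := by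
  ext ⟨o', f'⟩
  rw [fiberwise_apply, fiber_single, lp.coeFn_sum, Finset.sum_apply]
  by_cases h : o' = o
  · subst h; simp [lp.single_apply, Pi.single_apply]
  · simp [lp.single_apply, h]

end Fiberwise

section Configurations

variable {n : ℕ} {Q : Type*} {q₀ : Q}

def restr (D : Finset (Lat n)) (c : Conf n Q q₀) : D → Q :=
  fun x => c.1 x.1

@[simp]
theorem restr_override (D : Finset (Lat n)) (f : D → Q) (c : Conf n Q q₀) :
    restr D (override D f c) = f := by
  funext x
  simp [restr, override, x.2]

@[simp]
theorem override_override (D : Finset (Lat n)) (f g : D → Q) (c : Conf n Q q₀) :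
    override D f (override D g c) = override D f c := by
  apply Subtype.ext
  funext x
  by_cases h : x ∈ D <;> simp [override, h]

@[simp]
theorem override_restr (D : Finset (Lat n)) (c : Conf n Q q₀) : override D (restr D c) c = c := by
  apply Subtype.ext
  funext x
  simp [override, restr]

theorem mem_suppF {c : Conf n Q q₀} {x : Lat n} : x ∈ suppF c ↔ c.1 x ≠ q₀ :=
  Set.Finite.mem_toFinset _

theorem override_restr_c0 {D : Finset (Lat n)} {c : Conf n Q q₀} (h : suppF c ⊆ D) :
    override D (restr D c) (c0 n Q q₀) = c := by
  apply Subtype.ext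
  funext x
  by_cases hx : x ∈ D
  · simp [override, restr, hx]
  · have : c.1 x = q₀ := not_not.1 fun hne => hx (h (mem_suppF.2 hne))
    simp [override, hx, this, c0]

theorem suppF_override_c0 (D : Finset (Lat n)) (f : D → Q) :
    suppF (override D f (c0 n Q q₀)) ⊆ D := by
  intro x hx
  by_contra hxD
  exact mem_suppF.1 hx (by simp [override, hxD, c0])

/-- A configuration splits into itself made quiescent on `D` and its pattern on `D`. -/
def splitEquiv (D : Finset (Lat n)) :
    Conf n Q q₀ ≃ {o : Conf n Q q₀ // override D (fun _ => q₀) o = o} × (D → Q) where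
  toFun c := (⟨override D (fun _ => q₀) c, override_override D _ _ c⟩, restr D c)
  invFun p := override D p.2 p.1.1
  left_inv c := by simp
  right_inv := fun ⟨⟨o, ho⟩, f⟩ => by
    ext1
    · exact Subtype.ext (by simpa using ho)
    · simp

theorem eVec_eq_single [DecidableEq (Conf n Q q₀)] (c : Conf n Q q₀) :
    eVec c = lp.single 2 c 1 := by
  unfold eVec
  convert rfl

def patternVec (D : Finset (Lat n)) (f : D → Q) : H n Q q₀ :=
  eVec (override D f (c0 n Q q₀))

theorem orthonormal_eVec : Orthonormal ℂ (eVec : Conf n Q q₀ → H n Q q₀) := by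
  classical
  rw [orthonormal_iff_ite]
  intro c c'
  simp [eVec_eq_single, lp.inner_single_left, lp.single_apply, Pi.single_apply]

theorem orthonormal_patternVec (D : Finset (Lat n)) :
    Orthonormal ℂ (patternVec (q₀ := q₀) D) :=
  orthonormal_eVec.comp _ fun f g h => by simpa using congrArg (restr D) h

end Configurations

section LocalOperators

variable {n : ℕ} {Q : Type*} [Fintype Q] {q₀ : Q}

/-- `M ⊗ 1` under `H ≅ ℓ²(configurations quiescent on D) ⊗ ℂ^(D → Q)`. -/
def localOp (D : Finset (Lat n))
    (M : EuclideanSpace ℂ (D → Q) →L[ℂ] EuclideanSpace ℂ (D → Q)) :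
    H n Q q₀ →L[ℂ] H n Q q₀ :=
  isomCLM (lpCongr (splitEquiv D)).symm ∘L fiberwise M ∘L isomCLM (lpCongr (splitEquiv D))

theorem localOp_eVec [DecidableEq Q] (D : Finset (Lat n))
    (M : EuclideanSpace ℂ (D → Q) →L[ℂ] EuclideanSpace ℂ (D → Q)) (c : Conf n Q q₀) :
    localOp D M (eVec c) =
      ∑ f, M (EuclideanSpace.single (restr D c) 1) f • eVec (override D f c) := by
  classical
  simp only [localOp, isomCLM, ContinuousLinearMap.comp_apply,
    LinearIsometry.coe_toContinuousLinearMap, LinearIsometryEquiv.coe_toLinearIsometry,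
    eVec_eq_single, lpCongr_single]
  rw [show splitEquiv D c = (_, restr D c) from rfl, fiberwise_single, map_sum]
  refine Finset.sum_congr rfl fun f _ => ?_
  rw [map_smul, lpCongr_symm_single]
  simp [splitEquiv]

theorem isLocalUpon_localOp (D : Finset (Lat n))
    (M : EuclideanSpace ℂ (D → Q) →L[ℂ] EuclideanSpace ℂ (D → Q)) :
    IsLocalUpon q₀ D (localOp D M) := by
  classical
  exact ⟨fun f g => M (EuclideanSpace.single g 1) f, localOp_eVec D M⟩

theorem norm_localOp_le (D : Finset (Lat n))
    (M : EuclideanSpace ℂ (D → Q) →L[ℂ] EuclideanSpace ℂ (D → Q)) :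
    ‖(localOp D M : H n Q q₀ →L[ℂ] H n Q q₀)‖ ≤ ‖M‖ :=
  ContinuousLinearMap.opNorm_le_bound _ (norm_nonneg M) fun ψ => calc
    ‖localOp D M ψ‖ = ‖fiberwise M (lpCongr (splitEquiv D) ψ)‖ := by
      simp [localOp, isomCLM]
    _ ≤ ‖M‖ * ‖lpCongr (splitEquiv D) ψ‖ :=
      (fiberwise M).le_of_opNorm_le (norm_fiberwise_le M) _
    _ = ‖M‖ * ‖ψ‖ := by rw [LinearIsometryEquiv.norm_map]

open Classical in
def patternEmbedding (D : Finset (Lat n)) : EuclideanSpace ℂ (D → Q) →ₗᵢ[ℂ] H n Q q₀ :=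
  LinearMap.isometryOfOrthonormal
    (Fintype.linearCombination ℂ (patternVec D) ∘ₗ
      (WithLp.linearEquiv 2 ℂ ((D → Q) → ℂ)).toLinearMap)
    (v := (EuclideanSpace.basisFun (D → Q) ℂ).toBasis)
    (by simp)
    (by
      convert orthonormal_patternVec (q₀ := q₀) D
      ext1 f
      simp [Fintype.linearCombination_apply_single])

theorem patternEmbedding_apply (D : Finset (Lat n)) (u : EuclideanSpace ℂ (D → Q)) :
    patternEmbedding (q₀ := q₀) D u = ∑ f, u f • patternVec D f := by
  change Fintype.linearCombination ℂ (patternVec D) u.ofLp = _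
  simp [Fintype.linearCombination_apply]

theorem range_patternEmbedding (D : Finset (Lat n)) :
    LinearMap.range (patternEmbedding (q₀ := q₀) D).toLinearMap =
      Submodule.span ℂ (Set.range (patternVec D)) := by
  change LinearMap.range (Fintype.linearCombination ℂ (patternVec D) ∘ₗ
    (WithLp.linearEquiv 2 ℂ ((D → Q) → ℂ)).toLinearMap) = _
  rw [LinearMap.range_comp_of_range_eq_top _ (LinearEquiv.range _),
    Fintype.range_linearCombination]

theorem localOp_comp_patternEmbedding (D : Finset (Lat n))
    (M : EuclideanSpace ℂ (D → Q) →L[ℂ] EuclideanSpace ℂ (D → Q)) :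
    localOp D M ∘L (patternEmbedding (q₀ := q₀) D).toContinuousLinearMap =
      (patternEmbedding D).toContinuousLinearMap ∘L M := by
  classical
  refine ContinuousLinearMap.coe_injective <|
    (EuclideanSpace.basisFun _ ℂ).toBasis.ext fun g => ?_
  simp [patternEmbedding_apply, patternVec, localOp_eVec]

def compress (D : Finset (Lat n)) (A : H n Q q₀ →L[ℂ] H n Q q₀) :
    EuclideanSpace ℂ (D → Q) →L[ℂ] EuclideanSpace ℂ (D → Q) :=
  ContinuousLinearMap.adjoint (patternEmbedding D).toContinuousLinearMap ∘L A ∘L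
    (patternEmbedding D).toContinuousLinearMap

theorem norm_compress_le (D : Finset (Lat n)) (A : H n Q q₀ →L[ℂ] H n Q q₀) :
    ‖compress D A‖ ≤ ‖A‖ := by
  have hJ := (patternEmbedding (q₀ := q₀) D).norm_toContinuousLinearMap_le
  calc ‖compress D A‖
      ≤ ‖ContinuousLinearMap.adjoint (patternEmbedding (q₀ := q₀) D).toContinuousLinearMap‖ *
          (‖A‖ * ‖(patternEmbedding (q₀ := q₀) D).toContinuousLinearMap‖) :=
        (ContinuousLinearMap.opNorm_comp_le _ _).trans
          (mul_le_mul_of_nonneg_left (ContinuousLinearMap.opNorm_comp_le _ _) (norm_nonneg _))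
    _ ≤ 1 * (‖A‖ * 1) := by
        rw [LinearIsometryEquiv.norm_map]
        gcongr
    _ = ‖A‖ := by ring

abbrev patternSubspace (D : Finset (Lat n)) : Submodule ℂ (H n Q q₀) :=
  LinearMap.range (patternEmbedding D).toLinearMap

theorem localOp_compress_comp_starProjection (D : Finset (Lat n))
    (A : H n Q q₀ →L[ℂ] H n Q q₀) :
    localOp D (compress D A) ∘L (patternSubspace D).starProjection =
      (patternSubspace D).starProjection ∘L A ∘L (patternSubspace D).starProjection := by
  simp only [← comp_adjoint_eq_starProjection, compress, ← ContinuousLinearMap.comp_assoc,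
    localOp_comp_patternEmbedding]

theorem monotone_patternSubspace : Monotone (patternSubspace (Q := Q) (q₀ := q₀) (n := n)) := by
  intro D D' hD
  simp only [patternSubspace, range_patternEmbedding]
  refine Submodule.span_mono ?_
  rintro _ ⟨f, rfl⟩
  exact ⟨restr D' (override D f (c0 n Q q₀)), by
    simp [patternVec, override_restr_c0 ((suppF_override_c0 D f).trans hD)]⟩

theorem top_le_closure_iSup_patternSubspace :
    ⊤ ≤ (⨆ D : Finset (Lat n), patternSubspace (Q := Q) (q₀ := q₀) D).topologicalClosure := by
  have hdense := (default : HilbertBasis (Conf n Q q₀) ℂ (H n Q q₀)).dense_span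
  rw [← hdense]
  refine Submodule.topologicalClosure_mono (Submodule.span_le.2 ?_)
  rintro _ ⟨c, rfl⟩
  refine Submodule.mem_iSup_of_mem (suppF c) ?_
  rw [patternSubspace, range_patternEmbedding]
  exact Submodule.subset_span ⟨restr (suppF c) c, by
    simp only [patternVec, override_restr_c0 subset_rfl]; rfl⟩

end LocalOperators

theorem local_operators_dense_strong_general
    (n : ℕ) (Q : Type) [Fintype Q] (q₀ : Q)
    (A : H n Q q₀ →L[ℂ] H n Q q₀) (ε : ℝ) (hε : 0 < ε) (m : ℕ) (v : Fin m → H n Q q₀) :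
    ∃ (D : Finset (Lat n)) (T : H n Q q₀ →L[ℂ] H n Q q₀),
      IsLocalUpon q₀ D T ∧ ∀ i : Fin m, ‖A (v i) - T (v i)‖ < ε := by
  have hconv : ∀ x, Tendsto (fun D => localOp D (compress D A) x) atTop (𝓝 (A x)) :=
    tendsto_apply_of_comp_starProjection _ monotone_patternSubspace
      top_le_closure_iSup_patternSubspace A _
      (fun D => (norm_localOp_le D _).trans (norm_compress_le D A))
      (localOp_compress_comp_starProjection · A)
  obtain ⟨D, hD⟩ :=
    (eventually_all.2 fun i => (hconv (v i)).eventually (Metric.ball_mem_nhds _ hε)).exists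
  refine ⟨D, localOp D (compress D A), isLocalUpon_localOp D _, fun i => ?_⟩
  simpa [dist_eq_norm, norm_sub_rev] using hD i

/-- Density Theorem, strong operator topology. The local operators are dense in
the bounded operators on `H` in the strong operator topology. -/
theorem local_operators_dense_strong
    (n : ℕ) (hn : 1 ≤ n) (Q : Type) [Fintype Q] (q₀ : Q)
    (A : H n Q q₀ →L[ℂ] H n Q q₀) (ε : ℝ) (hε : 0 < ε) (m : ℕ) (v : Fin m → H n Q q₀) :
    ∃ (D : Finset (Lat n)) (T : H n Q q₀ →L[ℂ] H n Q q₀),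
      IsLocalUpon q₀ D T ∧ ∀ i : Fin m, ‖A (v i) - T (v i)‖ < ε :=
  local_operators_dense_strong_general n Q q₀ A ε hε m v

end QCA
end
end

section
/- The propagation map s is a bijection of Ĉ, and there is a unique unitary operator σ on Ĥ with σ e_c = e_{s c} for all c ∈ Ĉ; moreover σ is translation-invariant, and σ is causal relative to 𝒩: for every x ∈ ℤ^n and every bounded operator A on Ĥ local upon {x}, σ⁻¹ A σ is local upon 𝒩_x. -/
open scoped ENNReal

noncomputable section

namespace QCA

/-!
The propagation map `s` is a permutation of the configurations (its inverse moves component `z`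
by `-z`), so `e_c ↦ e_{s c}` extends to a unitary `σ`, unique because the `e_c` span a dense
subspace. As `s` commutes with translations, so does `σ`. For causality, `σ⁻¹ A σ e_c` is computed
by rewriting the cell `x` of `s c` and moving back with `s⁻¹`: this rewrites, and reads, exactly the
component `z` of `c` at the cell `x + z` for `z ∈ 𝒩`, all of which lie in `𝒩_x`.
-/

section PermutationOperator

variable {n : ℕ} {A : Type*} {q0 : A}

theorem lpCongr_eVec (e : Conf n A q0 ≃ Conf n A q0) (c : Conf n A q0) :
    lpCongr e (eVec c) = eVec (e c) := by
  classical
  refine lp.ext (funext fun k => ?_)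
  change (eVec c : Conf n A q0 → ℂ) (e.symm k) = (eVec (e c) : Conf n A q0 → ℂ) k
  simp only [eVec, lp.single_apply, Pi.single_apply, e.symm_apply_eq]

theorem lpCongr_symm_eVec (e : Conf n A q0 ≃ Conf n A q0) (c : Conf n A q0) :
    (lpCongr e).symm (eVec c) = eVec (e.symm c) := by
  rw [LinearIsometryEquiv.symm_apply_eq, lpCongr_eVec, e.apply_symm_apply]

theorem ext_eVec {S T : H n A q0 →L[ℂ] H n A q0} (h : ∀ c, S (eVec c) = T (eVec c)) : S = T := by
  classical
  refine ContinuousLinearMap.ext fun f => ?_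
  have hsingle : ∀ c, lp.single 2 c (f c) = f c • eVec c := fun c => by
    rw [eVec, ← lp.single_smul, smul_eq_mul, mul_one]
  have hf := lp.hasSum_single ENNReal.ofNat_ne_top f
  simp only [hsingle] at hf
  refine (S.hasSum hf).unique ?_
  simpa only [map_smul, h] using T.hasSum hf

def permUnitary (π : Conf n A q0 ≃ Conf n A q0) : unitary (H n A q0 →L[ℂ] H n A q0) :=
  Unitary.linearIsometryEquiv.symm (lpCongr π)

theorem permUnitary_apply_eVec (π : Conf n A q0 ≃ Conf n A q0) (c : Conf n A q0) :
    (permUnitary π : H n A q0 →L[ℂ] H n A q0) (eVec c) = eVec (π c) :=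
  lpCongr_eVec π c

theorem existsUnique_unitary_apply_eVec (π : Conf n A q0 ≃ Conf n A q0) :
    ∃! σ : unitary (H n A q0 →L[ℂ] H n A q0),
      ∀ c, (σ : H n A q0 →L[ℂ] H n A q0) (eVec c) = eVec (π c) :=
  ⟨permUnitary π, permUnitary_apply_eVec π, fun _ hσ =>
    Subtype.ext (ext_eVec fun c => by rw [hσ, permUnitary_apply_eVec])⟩

theorem ringInverse_apply_eVec {σ : H n A q0 →L[ℂ] H n A q0}
    (hσ : σ ∈ unitary (H n A q0 →L[ℂ] H n A q0)) {π : Conf n A q0 ≃ Conf n A q0}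
    (hπ : ∀ c, σ (eVec c) = eVec (π c)) (c : Conf n A q0) :
    Ring.inverse σ (eVec c) = eVec (π.symm c) := by
  have hinv : Ring.inverse σ = star σ := Ring.inverse_unit (Unitary.toUnits ⟨σ, hσ⟩)
  rw [hinv]
  calc star σ (eVec c) = star σ (σ (eVec (π.symm c))) := by rw [hπ, π.apply_symm_apply]
    _ = eVec (π.symm c) := congr($(Unitary.star_mul_self_of_mem hσ) (eVec (π.symm c)))

theorem translationInvariant_of_apply_eVec {σ : H n A q0 →L[ℂ] H n A q0}
    {π : Conf n A q0 ≃ Conf n A q0}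
    (hπ : ∀ c, σ (eVec c) = eVec (π c))
    (hshift : ∀ z c, π (shiftEquiv q0 z c) = shiftEquiv q0 z (π c)) :
    TranslationInvariant q0 σ := by
  intro z v
  suffices h : isomCLM (tau q0 z) ∘L σ ∘L isomCLM (tau q0 z).symm = σ from
    congr($h v)
  refine ext_eVec fun c => ?_
  change tau q0 z (σ ((lpCongr (shiftEquiv q0 z)).symm (eVec c))) = _
  rw [lpCongr_symm_eVec, hπ, hπ, tau, lpCongr_eVec, ← hshift, Equiv.apply_symm_apply]

theorem IsLocalUpon.conj_perm [Fintype A] {D D' : Finset (Lat n)}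
    {T σ σ' : H n A q0 →L[ℂ] H n A q0} {π : Conf n A q0 ≃ Conf n A q0}
    (hσ : ∀ c, σ (eVec c) = eVec (π c)) (hσ' : ∀ c, σ' (eVec c) = eVec (π.symm c))
    (G : ({x // x ∈ D} → A) → ({x // x ∈ D'} → A) → {x // x ∈ D'} → A)
    (R : ({x // x ∈ D'} → A) → {x // x ∈ D} → A)
    (hG : ∀ f c, π.symm (override D f (π c)) = override D' (G f fun y => c.1 y.1) c)
    (hR : ∀ c, (fun y : {x // x ∈ D} => (π c).1 y.1) = R fun y => c.1 y.1)
    (hT : IsLocalUpon q0 D T) : IsLocalUpon q0 D' (σ' ∘L T ∘L σ) := by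
  classical
  obtain ⟨a, ha⟩ := hT
  -- the coefficient of `g` collects the coefficients of all `f` that `G` turns into `g`
  refine ⟨fun g h => ∑ f, if g = G f h then a f (R h) else 0, fun c => ?_⟩
  simp only [ContinuousLinearMap.comp_apply, hσ, ha, hR, map_sum, map_smul, hσ', hG,
    Finset.sum_smul, ite_smul, zero_smul]
  rw [Finset.sum_comm]
  simp only [Finset.sum_ite_eq', Finset.mem_univ, if_true]

end PermutationOperator

section Propagation

variable {n : ℕ} {𝒩 : Finset (Lat n)} {K : {z // z ∈ 𝒩} → Type*}

def sConfInv (qz : ∀ z : {z // z ∈ 𝒩}, K z) (c : Conf n (∀ z : {z // z ∈ 𝒩}, K z) qz) :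
    Conf n (∀ z : {z // z ∈ 𝒩}, K z) qz :=
  ⟨fun x z => c.1 (x - z.1) z, by
    refine Set.Finite.subset
      (Set.finite_iUnion fun z : {z // z ∈ 𝒩} =>
        c.2.preimage (sub_left_injective (b := z.1)).injOn) ?_
    intro x hx
    obtain ⟨z, hz⟩ := Function.ne_iff.mp hx
    exact Set.mem_iUnion.2 ⟨z, fun h => hz (congrFun h z)⟩⟩

def sEquiv (qz : ∀ z : {z // z ∈ 𝒩}, K z) :
    Conf n (∀ z : {z // z ∈ 𝒩}, K z) qz ≃ Conf n (∀ z : {z // z ∈ 𝒩}, K z) qz where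
  toFun := sConf qz
  invFun := sConfInv qz
  left_inv c := Subtype.ext <| funext fun x => funext fun z =>
    congrArg (c.1 · z) (sub_add_cancel x z.1)
  right_inv c := Subtype.ext <| funext fun x => funext fun z =>
    congrArg (c.1 · z) (add_sub_cancel_right x z.1)

variable (qz : ∀ z : {z // z ∈ 𝒩}, K z)

theorem sEquiv_shiftEquiv (z : Lat n) (c : Conf n (∀ z : {z // z ∈ 𝒩}, K z) qz) :
    sEquiv qz (shiftEquiv qz z c) = shiftEquiv qz z (sEquiv qz c) :=
  Subtype.ext <| funext fun x => funext fun w =>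
    congrArg (c.1 · w) (add_right_comm x w.1 z)

theorem sEquiv_symm_override_singleton (x : Lat n)
    (f : {y // y ∈ ({x} : Finset (Lat n))} → ∀ z : {z // z ∈ 𝒩}, K z)
    (c : Conf n (∀ z : {z // z ∈ 𝒩}, K z) qz) :
    (sEquiv qz).symm (override {x} f (sEquiv qz c)) =
      override (nbhd 𝒩 x)
        (fun y w => if y.1 - w.1 = x then f ⟨x, Finset.mem_singleton_self x⟩ w else c.1 y.1 w)
        c := by
  refine Subtype.ext (funext fun y => funext fun w => ?_)
  change (sConfInv qz (override {x} f (sConf qz c))).1 y w = (override (nbhd 𝒩 x) _ c).1 y w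
  simp only [sConfInv, override, sConf, Finset.mem_singleton]
  split_ifs with hx hy hy
  · subst hx
    simp
  · exact absurd (Finset.mem_image.2 ⟨w.1, w.2, by rw [← hx, sub_add_cancel]⟩) hy
  · simp only [hx, if_false, sub_add_cancel]
  · simp only [sub_add_cancel]

end Propagation

theorem propagation_operator_properties_general
    (n : ℕ) (𝒩 : Finset (Lat n)) (K : {z // z ∈ 𝒩} → Type)
    [∀ z, Fintype (K z)] (qz : ∀ z : {z // z ∈ 𝒩}, K z) :
    Function.Bijective (sConf qz) ∧
      (∃! σ : unitary (H n (∀ z : {z // z ∈ 𝒩}, K z) qz →L[ℂ] H n (∀ z : {z // z ∈ 𝒩}, K z) qz),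
        ∀ c : Conf n (∀ z : {z // z ∈ 𝒩}, K z) qz, (σ : H n (∀ z : {z // z ∈ 𝒩}, K z) qz →L[ℂ] H n (∀ z : {z // z ∈ 𝒩}, K z) qz) (eVec c) = eVec (sConf qz c)) ∧
      ∀ σ : H n (∀ z : {z // z ∈ 𝒩}, K z) qz →L[ℂ] H n (∀ z : {z // z ∈ 𝒩}, K z) qz, σ ∈ unitary (H n (∀ z : {z // z ∈ 𝒩}, K z) qz →L[ℂ] H n (∀ z : {z // z ∈ 𝒩}, K z) qz) →
        (∀ c : Conf n (∀ z : {z // z ∈ 𝒩}, K z) qz, σ (eVec c) = eVec (sConf qz c)) →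
          TranslationInvariant qz σ ∧
          ∀ (x : Lat n) (A : H n (∀ z : {z // z ∈ 𝒩}, K z) qz →L[ℂ] H n (∀ z : {z // z ∈ 𝒩}, K z) qz), IsLocalUpon qz {x} A →
            IsLocalUpon qz (nbhd 𝒩 x) (Ring.inverse σ ∘L A ∘L σ) := by
  refine ⟨(sEquiv qz).bijective, existsUnique_unitary_apply_eVec (sEquiv qz),
    fun σ hσ hσs => ⟨translationInvariant_of_apply_eVec hσs (sEquiv_shiftEquiv qz),
      fun x A hA => ?_⟩⟩
  have hmem : ∀ w : {z // z ∈ 𝒩}, x + w.1 ∈ nbhd 𝒩 x := fun w =>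
    Finset.mem_image_of_mem _ w.2
  refine hA.conj_perm (π := sEquiv qz) hσs (ringInverse_apply_eVec hσ hσs)
    (fun f h y w => if y.1 - w.1 = x then f ⟨x, Finset.mem_singleton_self x⟩ w else h y w)
    (fun h _ w => h ⟨x + w.1, hmem w⟩ w) (sEquiv_symm_override_singleton qz x) fun c => ?_
  funext y w
  change c.1 (y.1 + w.1) w = c.1 (x + w.1) w
  rw [Finset.mem_singleton.mp y.2]

/-- STATEMENT 13. The propagation map `s` is a bijection of the set of finite configurations
in component form; there is a unique unitary `σ` on `Ĥ` with `σ e_c = e_{s c}`; moreover any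
such `σ` is translation invariant and causal relative to `𝒩`. -/
theorem propagation_operator_properties
    (n : ℕ) (hn : 1 ≤ n) (𝒩 : Finset (Lat n)) (K : {z // z ∈ 𝒩} → Type)
    [∀ z, Fintype (K z)] [∀ z, Nonempty (K z)] (qz : ∀ z : {z // z ∈ 𝒩}, K z) :
    Function.Bijective (sConf qz) ∧
      (∃! σ : unitary (H n (∀ z : {z // z ∈ 𝒩}, K z) qz →L[ℂ] H n (∀ z : {z // z ∈ 𝒩}, K z) qz),
        ∀ c : Conf n (∀ z : {z // z ∈ 𝒩}, K z) qz, (σ : H n (∀ z : {z // z ∈ 𝒩}, K z) qz →L[ℂ] H n (∀ z : {z // z ∈ 𝒩}, K z) qz) (eVec c) = eVec (sConf qz c)) ∧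
      ∀ σ : H n (∀ z : {z // z ∈ 𝒩}, K z) qz →L[ℂ] H n (∀ z : {z // z ∈ 𝒩}, K z) qz, σ ∈ unitary (H n (∀ z : {z // z ∈ 𝒩}, K z) qz →L[ℂ] H n (∀ z : {z // z ∈ 𝒩}, K z) qz) →
        (∀ c : Conf n (∀ z : {z // z ∈ 𝒩}, K z) qz, σ (eVec c) = eVec (sConf qz c)) →
          TranslationInvariant qz σ ∧
          ∀ (x : Lat n) (A : H n (∀ z : {z // z ∈ 𝒩}, K z) qz →L[ℂ] H n (∀ z : {z // z ∈ 𝒩}, K z) qz), IsLocalUpon qz {x} A →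
            IsLocalUpon qz (nbhd 𝒩 x) (Ring.inverse σ ∘L A ∘L σ) :=
  propagation_operator_properties_general n 𝒩 K qz

end QCA
end
end
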